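/- Let τ be a spanning tree of the complete graph K_n, let γ be the unique path in τ from vertex 1 to vertex 2, let i ∉ γ be a vertex with {1,i} an edge of τ. Then the graph obtained from τ by deleting the edge {1,i} and adding the edge {2,i} is again a spanning tree of K_n, and moreover {2,i} was not an edge of τ. -/

import Mathlib

/-!
In a tree every edge is a bridge, so deleting `s(0, i)` leaves two components: one containing `i`,
the other containing `0` and the whole path `γ` (which avoids `i`), hence `1`. The new edge
`s(1, i)` joins these two components, so the result is again connected and acyclic; and `s(1, i)`
cannot already be an edge of the tree, since it would join them without `s(0, i)`.
-/

open scoped Classical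

namespace SimpleGraph

variable {V : Type*} {G G' : SimpleGraph V} {a b i : V}

lemma Connected.of_adj_le_reachable (hG : G.Connected) (h : G.Adj ≤ G'.Reachable) :
    G'.Connected := by
  rw [reachable_eq_reflTransGen] at h
  refine (connected_iff _).2 ⟨fun u v ↦ ?_, hG.nonempty⟩
  rw [reachable_iff_reflTransGen]
  exact Relation.reflTransGen_closed h u v ((reachable_iff_reflTransGen u v).1 (hG u v))

lemma fromEdgeSet_edgeSet_sdiff_union (G : SimpleGraph V) (a i b j : V) :
    fromEdgeSet ((G.edgeSet \ {s(a, i)}) ∪ {s(b, j)}) = G.deleteEdges {s(a, i)} ⊔ edge b j := by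
  rw [fromEdgeSet_union, fromEdgeSet_sdiff, fromEdgeSet_edgeSet]
  rfl

lemma Walk.reachable_deleteEdges_of_notMem_support (p : G.Walk a b) {x : V}
    (hi : i ∉ p.support) : (G.deleteEdges {s(x, i)}).Reachable a b :=
  reachable_deleteEdges_iff_exists_walk.2 ⟨p, fun he ↦ hi (p.snd_mem_support_of_mem_edges he)⟩

lemma IsAcyclic.not_reachable_deleteEdges_of_walk (hG : G.IsAcyclic) (hai : G.Adj a i)
    (p : G.Walk a b) (hi : i ∉ p.support) : ¬(G.deleteEdges {s(a, i)}).Reachable b i :=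
  fun hbi ↦ isAcyclic_iff_forall_adj_isBridge.1 hG hai
    ((p.reachable_deleteEdges_of_notMem_support hi).trans hbi)

lemma IsAcyclic.not_adj_of_walk (hG : G.IsAcyclic) (hab : a ≠ b) (hai : G.Adj a i)
    (p : G.Walk a b) (hi : i ∉ p.support) : ¬G.Adj b i := fun hbi ↦
  hG.not_reachable_deleteEdges_of_walk hai p hi <| Adj.reachable <|
    deleteEdges_adj.2 ⟨hbi, by simp [hab.symm, hai.ne.symm]⟩

lemma IsTree.deleteEdges_sup_edge_of_walk (hG : G.IsTree) (hai : G.Adj a i)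
    (p : G.Walk a b) (hi : i ∉ p.support) : (G.deleteEdges {s(a, i)} ⊔ edge b i).IsTree := by
  have hbi : b ≠ i := by rintro rfl; exact hi p.end_mem_support
  have hai' : (G.deleteEdges {s(a, i)} ⊔ edge b i).Reachable a i :=
    ((p.reachable_deleteEdges_of_notMem_support hi).mono le_sup_left).trans
      (Adj.reachable (Or.inr ((adj_edge b i).2 ⟨rfl, hbi⟩)))
  refine ⟨hG.connected.of_adj_le_reachable fun u v huv ↦ ?_,
    (hG.isAcyclic.anti (deleteEdges_le _)).sup_edge_of_not_reachable
      (hG.isAcyclic.not_reachable_deleteEdges_of_walk hai p hi)⟩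
  by_cases he : s(u, v) = s(a, i)
  · rcases Sym2.eq_iff.1 he with ⟨rfl, rfl⟩ | ⟨rfl, rfl⟩
    exacts [hai', hai'.symm]
  · exact Adj.reachable (Or.inl (deleteEdges_adj.2 ⟨huv, he⟩))

end SimpleGraph

/-- if `τ` is a spanning tree of `Kₙ`, `γ` the unique path in
`τ` from vertex `1` to vertex `2` (here `0` and `1 : Fin n`), and `i ∉ γ` a
vertex with `{1, i}` an edge of `τ`, then `{2, i}` is not an edge of `τ` and
removing `{1, i}` and adding `{2, i}` yields again a spanning tree. -/
theorem tree_edge_swap (n : ℕ) (hn : 2 ≤ n)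
    (τ : SimpleGraph (Fin n)) (hτ : τ.IsTree) (i : Fin n)
    (hadj : τ.Adj ⟨0, by omega⟩ i)
    (hnotpath : ∀ p : τ.Walk ⟨0, by omega⟩ ⟨1, by omega⟩,
      p.IsPath → i ∉ p.support) :
    ¬ τ.Adj ⟨1, by omega⟩ i ∧
      (SimpleGraph.fromEdgeSet
          ((τ.edgeSet \ {s(⟨0, by omega⟩, i)}) ∪
            {s((⟨1, by omega⟩ : Fin n), i)})).IsTree := by
  obtain ⟨γ, hγ, -⟩ := hτ.existsUnique_path ⟨0, by omega⟩ ⟨1, by omega⟩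
  have hiγ := hnotpath γ hγ
  rw [SimpleGraph.fromEdgeSet_edgeSet_sdiff_union]
  exact ⟨hτ.isAcyclic.not_adj_of_walk (by simp) hadj γ hiγ,
    hτ.deleteEdges_sup_edge_of_walk hadj γ hiγ⟩
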